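/- Let q ≥ 1. The image under B of the closed unit cube [−1,1]^q equals the closure of the invertible region D_θ; that is, B(closure D_ζ) = closure D_θ. -/

import Mathlib

/-! Write `P_k(z) = 1 - θ_{1,k} z - ⋯ - θ_{k,k} z^k` and `P_k^*(z) = z^k P_k(1/z)` for its
reciprocal. The recursion is the Schur step `P_{k+1}(z) = P_k(z) - ζ_{k+1} z P_k^*(z)`. If `P_k`
has no zero in the closed unit disc, then `|P_k^*| ≤ |P_k|` there by the maximum modulus principle
applied to `P_k^* / P_k`, which has modulus one on the circle; hence `|ζ_{k+1}| < 1` keeps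
`P_{k+1}` zero-free. Conversely, if `P_{k+1}` is zero-free then Vieta gives `|c| < 1` for its top
coefficient `c = θ_{k+1,k+1}`, and `(1 - c²) P_k = P_{k+1} + c P_{k+1}^*` runs the step backwards
with `P_k` again zero-free. So `B` maps the open cube onto `D_θ`; as `B` is continuous and the closed
cube is compact, the image of the closure is the closure of the image. -/

/-- Forward recursion for the Barndorff-Nielsen–Schou / Monahan transformation:
`fwdRow ζ k i = θ_{i,k}` (1-based), with `θ_{k,k} = ζ_k` and
`θ_{i,k} = θ_{i,k-1} - ζ_k * θ_{k-i,k-1}` for `1 ≤ i ≤ k-1`. -/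
noncomputable def fwdRow (ζ : ℕ → ℝ) : ℕ → ℕ → ℝ
  | 0 => fun _ => 0
  | (k+1) => fun i =>
      if i = k + 1 then ζ (k + 1)
      else fwdRow ζ k i - ζ (k + 1) * fwdRow ζ k (k + 1 - i)

open Classical in
/-- Reverse recursion: `(invAux q θ d).1` is row `q - d` (i.e. `θ_{·, q-d}`), and
`(invAux q θ d).2` is the proposition that `|θ_{j,j}| < 1` for all `j` with `q - d ≤ j ≤ q`.
Row `q-(d+1)` is given by `θ_{i,k-1} = (θ_{i,k} + θ_{k,k} θ_{k-i,k})/(1-θ_{k,k}^2)` with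
`k = q - d` when the diagonal condition holds at all levels `≥ k`, and is `0` otherwise. -/
noncomputable def invAux (q : ℕ) (θ : ℕ → ℝ) : ℕ → (ℕ → ℝ) × Prop
  | 0 => (θ, |θ q| < 1)
  | (d+1) =>
      let p := invAux q θ d
      let row : ℕ → ℝ := fun i =>
        if p.2 then (p.1 i + p.1 (q - d) * p.1 (q - d - i)) / (1 - (p.1 (q - d)) ^ 2)
        else 0
      (row, p.2 ∧ |row (q - d - 1)| < 1)

/-- Interpret a vector in `ℝ^q` as a 1-based sequence `ℕ → ℝ` (value `0` out of range). -/
def toSeq {q : ℕ} (v : Fin q → ℝ) : ℕ → ℝ :=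
  fun n => if h : n - 1 < q then v ⟨n - 1, h⟩ else 0

/-- The map `B : ℝ^q → ℝ^q`, `B(ζ)_i = θ_{i,q}`. -/
noncomputable def Bmap {q : ℕ} (ζ : Fin q → ℝ) : Fin q → ℝ :=
  fun i => fwdRow (toSeq ζ) q (i.1 + 1)

/-- The map `B⁻ : ℝ^q → ℝ^q`, `B⁻(θ)_i = θ_{i,i}` computed by the reverse recursion. -/
noncomputable def Binv {q : ℕ} (θ : Fin q → ℝ) : Fin q → ℝ :=
  fun i => (invAux q (toSeq θ) (q - (i.1 + 1))).1 (i.1 + 1)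

/-- The invertible region `D_θ ⊆ ℝ^q`: all complex roots of
`θ(z) = 1 - θ_1 z - ⋯ - θ_q z^q` satisfy `|z| > 1`. -/
def invRegion (q : ℕ) : Set (Fin q → ℝ) :=
  {θ | ∀ z : ℂ, 1 - ∑ i : Fin q, (θ i : ℂ) * z ^ (i.1 + 1) = 0 → 1 < ‖z‖}

/-- The open unit cube `D_ζ = (-1,1)^q ⊆ ℝ^q`. -/
def openCube (q : ℕ) : Set (Fin q → ℝ) :=
  {ζ | ∀ i, ζ i ∈ Set.Ioo (-1 : ℝ) 1}

open Finset Polynomial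

noncomputable def maPoly (a : ℕ → ℝ) (k : ℕ) (z : ℂ) : ℂ :=
  1 - ∑ i ∈ range k, (a (i + 1) : ℂ) * z ^ (i + 1)

/-- `z ^ k * maPoly a k z⁻¹`, the reciprocal polynomial of `maPoly a k`. -/
noncomputable def maPolyRecip (a : ℕ → ℝ) (k : ℕ) (z : ℂ) : ℂ :=
  z ^ k - ∑ i ∈ range k, (a (k - i) : ℂ) * z ^ i

def IsInvertibleMA (a : ℕ → ℝ) (k : ℕ) : Prop :=
  ∀ z : ℂ, ‖z‖ ≤ 1 → maPoly a k z ≠ 0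

lemma differentiable_maPoly (a : ℕ → ℝ) (k : ℕ) : Differentiable ℂ (maPoly a k) := by
  unfold maPoly; fun_prop

lemma differentiable_maPolyRecip (a : ℕ → ℝ) (k : ℕ) : Differentiable ℂ (maPolyRecip a k) := by
  unfold maPolyRecip; fun_prop

lemma maPolyRecip_eq_pow_mul_conj (a : ℕ → ℝ) (k : ℕ) {z : ℂ} (hz : ‖z‖ = 1) :
    maPolyRecip a k z = z ^ k * starRingEnd ℂ (maPoly a k z) := by
  have hz0 : z ≠ 0 := norm_ne_zero_iff.mp (by rw [hz]; exact one_ne_zero)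
  rw [maPolyRecip, maPoly, map_sub, map_one, mul_sub, mul_one, map_sum, mul_sum,
    ← sum_range_reflect]
  refine congrArg _ (sum_congr rfl fun i hi => ?_)
  have hik : i < k := mem_range.mp hi
  rw [map_mul, map_pow, Complex.conj_ofReal, ← Complex.inv_eq_conj hz, inv_pow, mul_left_comm,
    ← pow_sub₀ z hz0 (by omega : i + 1 ≤ k), show k - (k - 1 - i) = i + 1 by omega,
    show k - (i + 1) = k - 1 - i by omega]

lemma norm_maPolyRecip_eq (a : ℕ → ℝ) (k : ℕ) {z : ℂ} (hz : ‖z‖ = 1) :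
    ‖maPolyRecip a k z‖ = ‖maPoly a k z‖ := by
  rw [maPolyRecip_eq_pow_mul_conj a k hz, norm_mul, norm_pow, hz, one_pow, one_mul,
    Complex.norm_conj]

theorem norm_le_norm_of_norm_eq_on_sphere {f g : ℂ → ℂ} (hf : Differentiable ℂ f)
    (hg : Differentiable ℂ g) (hg0 : ∀ z : ℂ, ‖z‖ ≤ 1 → g z ≠ 0)
    (hfg : ∀ z : ℂ, ‖z‖ = 1 → ‖f z‖ = ‖g z‖) {z : ℂ} (hz : ‖z‖ ≤ 1) :
    ‖f z‖ ≤ ‖g z‖ := by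
  have hcl : closure (Metric.ball (0 : ℂ) 1) = Metric.closedBall 0 1 :=
    closure_ball 0 one_ne_zero
  have hquot : DiffContOnCl ℂ (fun w => f w / g w) (Metric.ball 0 1) :=
    DifferentiableOn.diffContOnCl <| hf.differentiableOn.div hg.differentiableOn fun w hw =>
      hg0 w (by simpa [hcl] using hw)
  have hbound := Complex.norm_le_of_forall_mem_frontier_norm_le Metric.isBounded_ball hquot
    (C := 1) (fun w hw => ?_) (z := z) (by simpa [hcl] using hz)
  · rwa [norm_div, div_le_one (norm_pos_iff.mpr (hg0 z hz))] at hbound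
  · rw [frontier_ball 0 one_ne_zero, mem_sphere_zero_iff_norm] at hw
    rw [norm_div, hfg w hw, div_self (norm_ne_zero_iff.mpr (hg0 w hw.le))]

lemma IsInvertibleMA.norm_maPolyRecip_le {a : ℕ → ℝ} {k : ℕ} (h : IsInvertibleMA a k)
    {z : ℂ} (hz : ‖z‖ ≤ 1) : ‖maPolyRecip a k z‖ ≤ ‖maPoly a k z‖ :=
  norm_le_norm_of_norm_eq_on_sphere (differentiable_maPolyRecip a k) (differentiable_maPoly a k)
    h (fun _ hw => norm_maPolyRecip_eq a k hw) hz

lemma add_mul_ne_zero_of_norm_lt_one {p u w : ℂ} (hp : p ≠ 0) (hu : ‖u‖ < 1) (hw : ‖w‖ ≤ ‖p‖) :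
    p + u * w ≠ 0 := by
  have huw : ‖u * w‖ < ‖p‖ := by
    rw [norm_mul]
    calc ‖u‖ * ‖w‖ ≤ ‖u‖ * ‖p‖ := by gcongr
      _ < ‖p‖ := mul_lt_of_lt_one_left (norm_pos_iff.mpr hp) hu
  intro h
  rw [add_eq_zero_iff_eq_neg.mp h, norm_neg] at huw
  exact lt_irrefl _ huw

lemma one_lt_norm_multiset_prod {K : Type*} [NormedField K] {s : Multiset K} (hs : s ≠ 0)
    (h : ∀ x ∈ s, 1 < ‖x‖) : 1 < ‖s.prod‖ := by
  obtain ⟨x, hx⟩ := Multiset.exists_mem_of_ne_zero hs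
  obtain ⟨t, rfl⟩ := Multiset.exists_cons_of_mem hx
  have ht : 1 ≤ ‖t.prod‖ := by
    rw [← normHom_apply, map_multiset_prod]
    exact Multiset.one_le_prod <| by
      simpa using fun y hy => (h y (Multiset.mem_cons_of_mem hy)).le
  rw [Multiset.prod_cons, norm_mul]
  exact one_lt_mul_of_lt_of_le (h x (Multiset.mem_cons_self x t)) ht

/-- Vieta: the constant term `1` is `±a k` times the product of the roots, all of norm `> 1`. -/
theorem IsInvertibleMA.abs_lt_one {a : ℕ → ℝ} {k : ℕ} (h : IsInvertibleMA a k) (hk : 0 < k) :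
    |a k| < 1 := by
  rcases eq_or_ne (a k) 0 with ha | ha
  · simp [ha]
  set p : ℂ[X] := 1 - ∑ i ∈ range k, C (a (i + 1) : ℂ) * X ^ (i + 1) with hp
  have heval (z : ℂ) : p.eval z = maPoly a k z := by
    simp [hp, maPoly, eval_finsetSum]
  have hcoeff0 : p.coeff 0 = 1 := by
    simp [hp, coeff_X_pow]
  have hcoeffk : p.coeff k = -a k := by
    obtain ⟨m, rfl⟩ : ∃ m, k = m + 1 := ⟨k - 1, by omega⟩
    simp [hp, coeff_X_pow, coeff_one]
  have hdeg : p.natDegree = k := by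
    refine natDegree_eq_of_le_of_coeff_ne_zero ?_ (by simpa [hcoeffk] using ha)
    refine (natDegree_sub_le _ _).trans (max_le (by simp) ?_)
    refine natDegree_sum_le_of_forall_le _ _ fun i hi => ?_
    exact (natDegree_C_mul_X_pow_le _ _).trans (mem_range.mp hi)
  have hp0 : p ≠ 0 := fun h0 => one_ne_zero (hcoeff0.symm.trans (by simp [h0]))
  have hroots : ∀ x ∈ p.roots, 1 < ‖x‖ := fun x hx => by
    by_contra! hx1
    exact h x hx1 ((heval x).symm.trans ((mem_roots hp0).mp hx))
  have hsplit : p.Splits := IsAlgClosed.splits p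
  have hnonempty : p.roots ≠ 0 := by
    rw [← Multiset.card_pos, ← hsplit.natDegree_eq_card_roots, hdeg]; exact hk
  have hvieta := congrArg norm hsplit.coeff_zero_eq_leadingCoeff_mul_prod_roots
  rw [hcoeff0, leadingCoeff, hdeg, hcoeffk] at hvieta
  simp only [norm_one, norm_mul, norm_pow, norm_neg, one_pow, one_mul, Complex.norm_real,
    Real.norm_eq_abs] at hvieta
  nlinarith [one_lt_norm_multiset_prod hnonempty hroots, abs_pos.mpr ha]

lemma fwdRow_succ_self (ζ : ℕ → ℝ) (k : ℕ) : fwdRow ζ (k + 1) (k + 1) = ζ (k + 1) := by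
  simp [fwdRow]

lemma fwdRow_succ_of_lt (ζ : ℕ → ℝ) {k i : ℕ} (hi : i < k) :
    fwdRow ζ (k + 1) (i + 1) = fwdRow ζ k (i + 1) - ζ (k + 1) * fwdRow ζ k (k - i) := by
  simp [fwdRow, hi.ne]

lemma fwdRow_congr {ζ ζ' : ℕ → ℝ} {k : ℕ} (h : ∀ i < k, ζ (i + 1) = ζ' (i + 1)) :
    fwdRow ζ k = fwdRow ζ' k := by
  induction k with
  | zero => rfl
  | succ k ih =>
    simp only [fwdRow, ih fun i hi => h i (Nat.lt_succ_of_lt hi), h k (Nat.lt_succ_self k)]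

lemma continuous_fwdRow {X : Type*} [TopologicalSpace X] {ζ : X → ℕ → ℝ}
    (hζ : ∀ n, Continuous fun x => ζ x n) (k i : ℕ) : Continuous fun x => fwdRow (ζ x) k i := by
  induction k generalizing i with
  | zero => exact continuous_const
  | succ k ih =>
    simp only [fwdRow]
    split_ifs
    · exact hζ _
    · exact (ih i).sub ((hζ _).mul (ih _))

lemma maPoly_fwdRow_succ (ζ : ℕ → ℝ) (k : ℕ) (z : ℂ) :
    maPoly (fwdRow ζ (k + 1)) (k + 1) z =
      maPoly (fwdRow ζ k) k z - ζ (k + 1) * z * maPolyRecip (fwdRow ζ k) k z := by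
  have hsum : ∑ i ∈ range k, (fwdRow ζ (k + 1) (i + 1) : ℂ) * z ^ (i + 1) =
      ∑ i ∈ range k, (fwdRow ζ k (i + 1) : ℂ) * z ^ (i + 1) -
        ζ (k + 1) * z * ∑ i ∈ range k, (fwdRow ζ k (k - i) : ℂ) * z ^ i := by
    rw [mul_sum, ← sum_sub_distrib]
    refine sum_congr rfl fun i hi => ?_
    rw [fwdRow_succ_of_lt ζ (mem_range.mp hi)]
    push_cast
    ring
  rw [maPoly, maPoly, maPolyRecip, sum_range_succ, hsum, fwdRow_succ_self]
  ring

/-- Inverts `maPoly_fwdRow_succ`; multiplied out by `1 - c ^ 2` so that it holds for every `c`. -/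
lemma maPoly_add_mul_maPolyRecip {a a' : ℕ → ℝ} {k : ℕ} {c : ℝ} (hc : a (k + 1) = c)
    (ha' : ∀ i < k, (1 - c ^ 2) * a' (i + 1) = a (i + 1) + c * a (k - i)) (z : ℂ) :
    (1 - (c : ℂ) ^ 2) * maPoly a' k z = maPoly a (k + 1) z + c * maPolyRecip a (k + 1) z := by
  have hsum : (1 - (c : ℂ) ^ 2) * ∑ i ∈ range k, (a' (i + 1) : ℂ) * z ^ (i + 1) =
      ∑ i ∈ range k, (a (i + 1) : ℂ) * z ^ (i + 1) +
        c * ∑ i ∈ range k, (a (k - i) : ℂ) * z ^ (i + 1) := by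
    rw [mul_sum, mul_sum, ← sum_add_distrib]
    refine sum_congr rfl fun i hi => ?_
    have := congrArg (fun x : ℝ => (x : ℂ)) (ha' i (mem_range.mp hi))
    push_cast at this
    linear_combination z ^ (i + 1) * this
  rw [maPoly, maPoly, maPolyRecip, sum_range_succ, sum_range_succ', hc]
  simp only [Nat.add_sub_add_right, Nat.sub_zero, pow_zero, mul_one, hc]
  linear_combination -hsum

theorem isInvertibleMA_fwdRow {ζ : ℕ → ℝ} {k : ℕ} (hζ : ∀ i < k, |ζ (i + 1)| < 1) :
    IsInvertibleMA (fwdRow ζ k) k := by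
  induction k with
  | zero => intro z _; simp [maPoly]
  | succ k ih =>
    have hk : IsInvertibleMA (fwdRow ζ k) k := ih fun i hi => hζ i (Nat.lt_succ_of_lt hi)
    intro z hz
    have hu : ‖-(ζ (k + 1) * z : ℂ)‖ < 1 := by
      rw [norm_neg, norm_mul, Complex.norm_real, Real.norm_eq_abs]
      exact mul_lt_one_of_nonneg_of_lt_one_left (abs_nonneg _) (hζ k (Nat.lt_succ_self k)) hz
    rw [maPoly_fwdRow_succ, sub_eq_add_neg, ← neg_mul]
    exact add_mul_ne_zero_of_norm_lt_one (hk z hz) hu (hk.norm_maPolyRecip_le hz)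

theorem IsInvertibleMA.schur_reduction {a : ℕ → ℝ} {k : ℕ} (h : IsInvertibleMA a (k + 1)) :
    IsInvertibleMA (fun j => (a j + a (k + 1) * a (k + 1 - j)) / (1 - a (k + 1) ^ 2)) k := by
  have hc : |a (k + 1)| < 1 := h.abs_lt_one k.succ_pos
  have hc2 : 1 - a (k + 1) ^ 2 ≠ 0 := (sub_pos.mpr ((sq_lt_one_iff_abs_lt_one _).mpr hc)).ne'
  intro z hz
  have hstep := maPoly_add_mul_maPolyRecip (a := a) (k := k) rfl
    (a' := fun j => (a j + a (k + 1) * a (k + 1 - j)) / (1 - a (k + 1) ^ 2))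
    (fun i _ => by rw [Nat.add_sub_add_right]; field_simp) z
  have hne : maPoly a (k + 1) z + a (k + 1) * maPolyRecip a (k + 1) z ≠ 0 := by
    have hu : ‖(a (k + 1) : ℂ)‖ < 1 := by rwa [Complex.norm_real, Real.norm_eq_abs]
    exact add_mul_ne_zero_of_norm_lt_one (h z hz) hu (h.norm_maPolyRecip_le hz)
  rw [← hstep] at hne
  exact right_ne_zero_of_mul hne

theorem IsInvertibleMA.exists_fwdRow_eq {a : ℕ → ℝ} {k : ℕ} (h : IsInvertibleMA a k) :
    ∃ ζ : ℕ → ℝ, (∀ i < k, |ζ (i + 1)| < 1) ∧ ∀ i < k, fwdRow ζ k (i + 1) = a (i + 1) := by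
  induction k generalizing a with
  | zero => exact ⟨0, by simp, by simp⟩
  | succ k ih =>
    obtain ⟨ζ, hζ, hfwd⟩ := ih h.schur_reduction
    set c := a (k + 1)
    have hc : |c| < 1 := h.abs_lt_one k.succ_pos
    have hc2 : 1 - c ^ 2 ≠ 0 := (sub_pos.mpr ((sq_lt_one_iff_abs_lt_one c).mpr hc)).ne'
    refine ⟨Function.update ζ (k + 1) c, fun i hi => ?_, fun i hi => ?_⟩
    · rcases Nat.lt_succ_iff_lt_or_eq.mp hi with hi | rfl
      · rw [Function.update_of_ne (by omega)]; exact hζ i hi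
      · rwa [Function.update_self]
    have hrow : fwdRow (Function.update ζ (k + 1) c) k = fwdRow ζ k :=
      fwdRow_congr fun j hj => Function.update_of_ne (by omega) _ _
    rcases Nat.lt_succ_iff_lt_or_eq.mp hi with hi | rfl
    · have hmirror : fwdRow ζ k (k - i) = (a (k - i) + c * a (i + 1)) / (1 - c ^ 2) := by
        have := hfwd (k - 1 - i) (by omega)
        rwa [show k - 1 - i + 1 = k - i by omega, show k + 1 - (k - i) = i + 1 by omega] at this
      rw [fwdRow_succ_of_lt _ hi, hrow, Function.update_self, hfwd i hi, hmirror,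
        Nat.add_sub_add_right]
      field_simp
      ring
    · rw [fwdRow_succ_self, Function.update_self]

lemma toSeq_succ {q : ℕ} (v : Fin q → ℝ) {i : ℕ} (hi : i < q) : toSeq v (i + 1) = v ⟨i, hi⟩ := by
  simp [toSeq, hi]

lemma continuous_toSeq (q n : ℕ) : Continuous fun v : Fin q → ℝ => toSeq v n := by
  unfold toSeq
  split_ifs
  · exact continuous_apply _
  · exact continuous_const

lemma continuous_Bmap (q : ℕ) : Continuous (Bmap (q := q)) :=
  continuous_pi fun i => continuous_fwdRow (continuous_toSeq q) q (i + 1)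

lemma mem_invRegion_iff {q : ℕ} {θ : Fin q → ℝ} {a : ℕ → ℝ} (ha : ∀ i : Fin q, a (i + 1) = θ i) :
    θ ∈ invRegion q ↔ IsInvertibleMA a q := by
  have hpoly (z : ℂ) : maPoly a q z = 1 - ∑ i : Fin q, (θ i : ℂ) * z ^ (i.1 + 1) := by
    simp only [maPoly, ← ha]
    rw [Fin.sum_univ_eq_sum_range (fun i => (a (i + 1) : ℂ) * z ^ (i + 1))]
  simp only [invRegion, IsInvertibleMA, Set.mem_ofPred_eq, hpoly]
  exact forall_congr' fun z => by rw [← not_le, imp_not_comm]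

theorem image_Bmap_openCube (q : ℕ) : Bmap '' openCube q = invRegion q := by
  ext θ
  constructor
  · rintro ⟨ζ, hζ, rfl⟩
    refine (mem_invRegion_iff fun i => rfl).mpr (isInvertibleMA_fwdRow fun i hi => ?_)
    rw [toSeq_succ ζ hi]
    exact abs_lt.mpr (hζ _)
  · intro hθ
    obtain ⟨ζ, hζ, hfwd⟩ := ((mem_invRegion_iff fun i => toSeq_succ θ i.2).mp hθ).exists_fwdRow_eq
    refine ⟨fun i => ζ (i + 1), fun i => abs_lt.mp (hζ i i.2), funext fun i => ?_⟩
    rw [Bmap, fwdRow_congr fun j hj => toSeq_succ _ hj, hfwd i i.2, toSeq_succ θ i.2]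

lemma isCompact_closure_openCube (q : ℕ) : IsCompact (closure (openCube q)) :=
  (isCompact_Icc (a := -1) (b := 1)).closure_of_subset fun _ hζ =>
    ⟨fun i => (hζ i).1.le, fun i => (hζ i).2.le⟩

theorem closure_image_eq_general {q : ℕ} :
    Bmap '' closure (openCube q) = closure (invRegion q) := by
  rw [image_closure_of_isCompact (isCompact_closure_openCube q) (continuous_Bmap q).continuousOn,
    image_Bmap_openCube]

/-- For `q ≥ 1`, the image under `B` of the closed unit cube `[-1,1]^q` equals the
closure of the invertible region: `B(closure D_ζ) = closure D_θ`. -/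
theorem closure_image_eq {q : ℕ} (hq : 1 ≤ q) :
    Bmap '' closure (openCube q) = closure (invRegion q) :=
  closure_image_eq_general
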